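/- Lemma (TSO part of Lemma 1). For every well-formed execution and every relation mfence ⊆ po, under the TSO instantiation — ppo = {(x,y) | po x y ∧ ¬(x ∈ W ∧ y ∈ R)} (program order minus write-read pairs), fences = mfence, hb = ppo ∪ fences ∪ rfe, prop = ppo ∪ fences ∪ rfe ∪ fr — the four axioms SC-PER-LOCATION (acyclic(po-loc ∪ com)), NO-THIN-AIR (acyclic(hb)), OBSERVATION (irreflexive(fre ; prop ; hb*)) and PROPAGATION (acyclic(co ∪ prop)) all hold if and only if the execution is valid on Sparc TSO, i.e. if and only if acyclic(po-loc ∪ com) and acyclic(ppo ∪ fences ∪ co ∪ rfe ∪ fr) both hold. -/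

import Mathlib

/-! `co ∪ prop` is literally Sparc TSO's global order, so PROPAGATION is the second Sparc
condition. Conversely, that order contains `hb`, and a witness of `fre ; prop ; hb*` on some
event closes a cycle in it, so NO-THIN-AIR and OBSERVATION follow from its acyclicity. -/

universe u v

/-- Relational composition `r1 ; r2`. -/
def rcomp {E : Type u} (r1 r2 : E → E → Prop) : E → E → Prop :=
  fun x z => ∃ y, r1 x y ∧ r2 y z

/-- `irreflexive r` : no event is related to itself. -/
def irreflexiveRel {E : Type u} (r : E → E → Prop) : Prop := ¬ ∃ x, r x x

/-- `acyclic r` : the transitive closure of `r` is irreflexive. -/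
def acyclicRel {E : Type u} (r : E → E → Prop) : Prop :=
  irreflexiveRel (Relation.TransGen r)

/-- A well-formed execution `(E, po, rf, co)` together with its event data. -/
structure WellFormedExec (E : Type u) (Loc : Type v) where
  /-- thread of an event -/
  proc : E → ℕ
  /-- memory location of an event -/
  addr : E → Loc
  /-- set of write events -/
  W : Set E
  /-- set of read events -/
  R : Set E
  po : E → E → Prop
  rf : E → E → Prop
  co : E → E → Prop
  WR_disjoint : Disjoint W R
  po_trans : ∀ x y z, po x y → po y z → po x z
  po_irrefl : ∀ x, ¬ po x x
  po_wf : ∀ x y, po x y → x ≠ y ∧ proc x = proc y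
  po_total : ∀ x y, x ≠ y → proc x = proc y → po x y ∨ po y x
  rf_wf : ∀ w r, rf w r → w ∈ W ∧ r ∈ R ∧ addr w = addr r
  rf_exists_unique : ∀ r ∈ R, ∃! w, rf w r
  co_wf : ∀ w1 w2, co w1 w2 → w1 ∈ W ∧ w2 ∈ W ∧ w1 ≠ w2 ∧ addr w1 = addr w2
  co_trans : ∀ x y z, co x y → co y z → co x z
  co_irrefl : ∀ x, ¬ co x x
  co_total : ∀ w1 w2, w1 ∈ W → w2 ∈ W → w1 ≠ w2 → addr w1 = addr w2 → co w1 w2 ∨ co w2 w1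

namespace WellFormedExec

variable {E : Type u} {Loc : Type v} (X : WellFormedExec E Loc)

/-- program order restricted to the same location -/
def poloc : E → E → Prop := fun x y => X.po x y ∧ X.addr x = X.addr y

/-- from-read -/
def fr : E → E → Prop := fun r w1 => ∃ w0, X.rf w0 r ∧ X.co w0 w1

/-- communications -/
def com : E → E → Prop := fun x y => X.co x y ∨ X.rf x y ∨ X.fr x y

/-- external read-from -/
def rfe : E → E → Prop := fun w r => X.rf w r ∧ X.proc w ≠ X.proc r

/-- external from-read -/
def fre : E → E → Prop := fun r w => X.fr r w ∧ X.proc r ≠ X.proc w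

end WellFormedExec

theorem acyclicRel.mono {E : Type u} {r s : E → E → Prop} (hs : acyclicRel s) (h : r ≤ s) :
    acyclicRel r :=
  fun ⟨x, hx⟩ => hs ⟨x, Relation.TransGen.mono h _ _ hx⟩

theorem acyclicRel.irreflexiveRel_rcomp_rcomp_reflTransGen {E : Type u}
    {r₁ r₂ r₃ s : E → E → Prop} (hs : acyclicRel s) (h₁ : r₁ ≤ s) (h₂ : r₂ ≤ s) (h₃ : r₃ ≤ s) :
    irreflexiveRel (rcomp r₁ (rcomp r₂ (Relation.ReflTransGen r₃))) := by
  rintro ⟨x, y, hxy, z, hyz, hzx⟩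
  exact hs ⟨x, .head' (h₁ _ _ hxy) (.head (h₂ _ _ hyz) (Relation.ReflTransGen.mono h₃ _ _ hzx))⟩

section TSO

variable {E : Type u} {Loc : Type v}

/-- TSO preserved program order: program order minus write-read pairs. -/
def tsoPpo (X : WellFormedExec E Loc) : E → E → Prop :=
  fun x y => X.po x y ∧ ¬(x ∈ X.W ∧ y ∈ X.R)

/-- TSO happens-before: `ppo ∪ fences ∪ rfe`, where `fences = mfence`. -/
def tsoHb (X : WellFormedExec E Loc) (mfence : E → E → Prop) : E → E → Prop :=
  fun x y => tsoPpo X x y ∨ mfence x y ∨ X.rfe x y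

/-- TSO propagation order: `ppo ∪ fences ∪ rfe ∪ fr`. -/
def tsoProp (X : WellFormedExec E Loc) (mfence : E → E → Prop) : E → E → Prop :=
  fun x y => tsoPpo X x y ∨ mfence x y ∨ X.rfe x y ∨ X.fr x y

/-- Validity on Sparc TSO is SC-per-location plus acyclicity of this order. -/
def sparcOrder (X : WellFormedExec E Loc) (mfence : E → E → Prop) : E → E → Prop :=
  fun x y => tsoPpo X x y ∨ mfence x y ∨ X.co x y ∨ X.rfe x y ∨ X.fr x y

theorem tsoHb_le_sparcOrder (X : WellFormedExec E Loc) (mfence : E → E → Prop) :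
    tsoHb X mfence ≤ sparcOrder X mfence := by
  intro x y h
  unfold tsoHb at h
  unfold sparcOrder
  tauto

theorem tsoProp_le_sparcOrder (X : WellFormedExec E Loc) (mfence : E → E → Prop) :
    tsoProp X mfence ≤ sparcOrder X mfence := by
  intro x y h
  unfold tsoProp at h
  unfold sparcOrder
  tauto

theorem fre_le_sparcOrder (X : WellFormedExec E Loc) (mfence : E → E → Prop) :
    X.fre ≤ sparcOrder X mfence :=
  fun _ _ h => Or.inr <| Or.inr <| Or.inr <| Or.inr h.1

theorem co_or_tsoProp_eq_sparcOrder (X : WellFormedExec E Loc) (mfence : E → E → Prop) :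
    (fun x y => X.co x y ∨ tsoProp X mfence x y) = sparcOrder X mfence := by
  ext x y
  unfold tsoProp sparcOrder
  tauto

theorem tso_model_equiv_sparc_general (X : WellFormedExec E Loc)
    (mfence : E → E → Prop) :
    (acyclicRel (fun x y => X.poloc x y ∨ X.com x y) ∧
     acyclicRel (tsoHb X mfence) ∧
     irreflexiveRel (rcomp X.fre
       (rcomp (tsoProp X mfence) (Relation.ReflTransGen (tsoHb X mfence)))) ∧
     acyclicRel (fun x y => X.co x y ∨ tsoProp X mfence x y))
    ↔ (acyclicRel (fun x y => X.poloc x y ∨ X.com x y) ∧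
       acyclicRel (fun x y =>
         tsoPpo X x y ∨ mfence x y ∨ X.co x y ∨ X.rfe x y ∨ X.fr x y)) := by
  rw [co_or_tsoProp_eq_sparcOrder]
  constructor
  · rintro ⟨hsc, -, -, hsparc⟩
    exact ⟨hsc, hsparc⟩
  · rintro ⟨hsc, hsparc⟩
    have hhb := tsoHb_le_sparcOrder X mfence
    exact ⟨hsc, hsparc.mono hhb,
      hsparc.irreflexiveRel_rcomp_rcomp_reflTransGen (fre_le_sparcOrder X mfence)
        (tsoProp_le_sparcOrder X mfence) hhb,
      hsparc⟩

/-- The TSO part of Lemma 1: the four axioms under the TSO instantiation hold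
    iff the execution is valid on Sparc TSO. -/
theorem tso_model_equiv_sparc (X : WellFormedExec E Loc)
    (mfence : E → E → Prop) (hmf : ∀ x y, mfence x y → X.po x y) :
    (acyclicRel (fun x y => X.poloc x y ∨ X.com x y) ∧
     acyclicRel (tsoHb X mfence) ∧
     irreflexiveRel (rcomp X.fre
       (rcomp (tsoProp X mfence) (Relation.ReflTransGen (tsoHb X mfence)))) ∧
     acyclicRel (fun x y => X.co x y ∨ tsoProp X mfence x y))
    ↔ (acyclicRel (fun x y => X.poloc x y ∨ X.com x y) ∧
       acyclicRel (fun x y =>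
         tsoPpo X x y ∨ mfence x y ∨ X.co x y ∨ X.rfe x y ∨ X.fr x y)) :=
  tso_model_equiv_sparc_general X mfence

end TSO
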